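/- Let N be a positive integer and ω a real number. Suppose w : ℝ × [0,π] → ℝ is twice continuously differentiable, 2π-periodic in its first argument (w(τ+2π,x) = w(τ,x) for all τ, x), satisfies w(τ,0) = w(τ,π) = 0 for all τ, and satisfies N² ∂²_τ w(τ,x) − ∂²_x w(τ,x) = ω · cos τ · sin(N x) − cos³τ · sin³(N x)/sin²x for all (τ,x) ∈ ℝ × (0,π). Then ω = 3N/4. -/

import Mathlib

/-!
Test the equation against the eigenmode `cos τ * sin (N x)` on `[0, 2π] × [0, π]`. Integrating
by parts twice, in `τ` using periodicity and in `x` using the Dirichlet conditions, shows that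
the wave operator `N² ∂²_τ - ∂²_x` applied to `w` is orthogonal to the eigenmode, so the
projection of the forcing must vanish. That projection is `π² (ω / 2 - 3 N / 8)`: besides
`∫ cos² = π`, `∫ cos⁴ = 3π/4` and `∫₀^π sin² (N x) = π / 2`, it uses
`∫₀^π sin⁴ (N x) / sin² x = N π / 2`, which follows by writing `sin⁴ (N x) / sin² x` as a
combination of Dirichlet kernels, each of integral `π`.
-/

open Real Set Function Filter Topology intervalIntegral
open MeasureTheory (volume)

theorem integral_cos_nat_mul {n : ℕ} (hn : n ≠ 0) : ∫ x in (0)..π, cos (n * x) = 0 := by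
  rw [integral_comp_mul_left (fun x => cos x) (Nat.cast_ne_zero.mpr hn), integral_cos,
    sin_nat_mul_pi]
  simp

-- The Dirichlet kernel `D_m` evaluated at `2 x`.
noncomputable def dirichletKernel (m : ℕ) (x : ℝ) : ℝ :=
  1 + 2 * ∑ k ∈ Finset.range m, cos (2 * (k + 1) * x)

theorem continuous_dirichletKernel (m : ℕ) : Continuous (dirichletKernel m) := by
  unfold dirichletKernel; fun_prop

theorem dirichletKernel_mul_sin (m : ℕ) (x : ℝ) :
    dirichletKernel m x * sin x = sin ((2 * m + 1) * x) := by
  induction m with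
  | zero => simp [dirichletKernel]
  | succ m ih =>
    have h := sin_sub_sin ((2 * (m + 1) + 1) * x) ((2 * m + 1) * x)
    simp only [dirichletKernel, Finset.sum_range_succ] at ih ⊢
    push_cast
    rw [show ((2 * (m + 1) + 1) * x - (2 * m + 1) * x) / 2 = x by ring,
      show ((2 * (m + 1) + 1) * x + (2 * m + 1) * x) / 2 = 2 * (m + 1) * x by ring] at h
    linear_combination ih - h

theorem integral_dirichletKernel (m : ℕ) : ∫ x in (0)..π, dirichletKernel m x = π := by
  have hcos : ∀ k : ℕ, ∫ x in (0)..π, cos (2 * (k + 1) * x) = 0 := fun k => by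
    simpa using integral_cos_nat_mul (n := 2 * (k + 1)) (by positivity)
  simp only [dirichletKernel]
  rw [integral_add intervalIntegrable_const (by apply Continuous.intervalIntegrable; fun_prop),
    intervalIntegral.integral_const_mul, integral_finsetSum (fun k _ => by
      apply Continuous.intervalIntegrable; fun_prop)]
  simp [hcos]

theorem sin_pow_four_sub_sin_pow_four (a b : ℝ) :
    sin b ^ 4 - sin a ^ 4 = sin (b - a) * sin (b + a) * (1 - cos (b - a) * cos (b + a)) := by
  have hdiff : sin b ^ 2 - sin a ^ 2 = sin (b - a) * sin (b + a) := by
    simp only [sin_add, sin_sub]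
    linear_combination (-sin b ^ 2) * sin_sq_add_cos_sq a + sin a ^ 2 * sin_sq_add_cos_sq b
  have hsum : sin b ^ 2 + sin a ^ 2 = 1 - cos (b - a) * cos (b + a) := by
    simp only [cos_add, cos_sub]
    linear_combination cos a ^ 2 * sin_sq_add_cos_sq b + (1 - sin b ^ 2) * sin_sq_add_cos_sq a
  linear_combination (sin b ^ 2 + sin a ^ 2) * hdiff + sin (b - a) * sin (b + a) * hsum

-- A continuous version of `sin (N x) ^ 4 / sin x ^ 2`, obtained by telescoping
-- `sin ((j + 1) x) ^ 4 - sin (j x) ^ 4 = sin x ^ 2 * (D_j - (D_{2j+1} + D_{2j}) / 4)` at `2 x`.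
noncomputable def sinPowFourDivSinSq (N : ℕ) (x : ℝ) : ℝ :=
  ∑ j ∈ Finset.range N,
    (dirichletKernel j x - (dirichletKernel (2 * j + 1) x + dirichletKernel (2 * j) x) / 4)

theorem sinPowFourDivSinSq_mul_sin_sq (N : ℕ) (x : ℝ) :
    sinPowFourDivSinSq N x * sin x ^ 2 = sin (N * x) ^ 4 := by
  induction N with
  | zero => simp [sinPowFourDivSinSq]
  | succ N ih =>
    have hD := dirichletKernel_mul_sin N x
    set v := (2 * N + 1) * x
    have hquartic := sin_pow_four_sub_sin_pow_four (N * x) ((N + 1) * x)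
    have hsum := sin_add_sin (2 * v + x) (2 * v - x)
    rw [show (N + 1) * x - N * x = x by ring, show (N + 1) * x + N * x = v by ring] at hquartic
    rw [show (2 * v + x + (2 * v - x)) / 2 = 2 * v by ring,
      show (2 * v + x - (2 * v - x)) / 2 = x by ring, sin_two_mul] at hsum
    have hD₁ := dirichletKernel_mul_sin (2 * N + 1) x
    have hD₀ := dirichletKernel_mul_sin (2 * N) x
    push_cast at hD₁ hD₀ ⊢
    rw [show (2 * (2 * N + 1) + 1) * x = 2 * v + x by ring] at hD₁
    rw [show (2 * (2 * N) + 1) * x = 2 * v - x by ring] at hD₀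
    simp only [sinPowFourDivSinSq, Finset.sum_range_succ] at ih ⊢
    linear_combination ih + sin x * hD - sin x / 4 * (hD₁ + hD₀) - hquartic - sin x / 4 * hsum

theorem continuous_sinPowFourDivSinSq (N : ℕ) : Continuous (sinPowFourDivSinSq N) :=
  continuous_finsetSum _ fun j _ => by
    unfold dirichletKernel; fun_prop

theorem integral_sinPowFourDivSinSq (N : ℕ) :
    ∫ x in (0)..π, sinPowFourDivSinSq N x = N * π / 2 := by
  have hD (m : ℕ) : IntervalIntegrable (dirichletKernel m) volume 0 π :=
    (continuous_dirichletKernel m).intervalIntegrable _ _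
  simp only [sinPowFourDivSinSq]
  rw [integral_finsetSum fun j _ => (hD j).sub (((hD _).add (hD _)).div_const _)]
  simp only [integral_sub (hD _) (((hD _).add (hD _)).div_const _), integral_div,
    integral_add (hD _) (hD _), integral_dirichletKernel]
  simp only [Finset.sum_sub_distrib, Finset.sum_const, Finset.card_range, nsmul_eq_mul]
  ring

theorem integral_sin_nat_mul_sq {N : ℕ} (hN : N ≠ 0) : ∫ x in (0)..π, sin (N * x) ^ 2 = π / 2 := by
  have hN' : (N : ℝ) ≠ 0 := Nat.cast_ne_zero.mpr hN
  rw [integral_comp_mul_left (fun x => sin x ^ 2) hN', integral_sin_sq, sin_nat_mul_pi]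
  simp only [mul_zero, sin_zero, zero_mul, sub_zero, sub_self, zero_add, smul_eq_mul]
  field_simp

theorem integral_forcing_mul_sin {N : ℕ} (hN : N ≠ 0) (a b : ℝ) :
    ∫ x in (0)..π, (a * sin (N * x) - b * sin (N * x) ^ 3 / sin x ^ 2) * sin (N * x)
      = a * (π / 2) - b * (N * π / 2) := by
  have hpoint (x : ℝ) (hx : x ∈ Ioo 0 π) :
      (a * sin (N * x) - b * sin (N * x) ^ 3 / sin x ^ 2) * sin (N * x)
        = a * sin (N * x) ^ 2 - b * sinPowFourDivSinSq N x := by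
    have hsin : sin x ≠ 0 := (sin_pos_of_pos_of_lt_pi hx.1 hx.2).ne'
    rw [eq_div_of_mul_eq (pow_ne_zero 2 hsin) (sinPowFourDivSinSq_mul_sin_sq N x)]
    ring
  rw [integral_congr_Ioo_of_le pi_pos.le hpoint, integral_sub, intervalIntegral.integral_const_mul,
    intervalIntegral.integral_const_mul, integral_sin_nat_mul_sq hN, integral_sinPowFourDivSinSq]
  · exact (continuous_const.mul (by fun_prop)).intervalIntegrable _ _
  · exact (continuous_const.mul (continuous_sinPowFourDivSinSq N)).intervalIntegrable _ _

theorem integral_cos_mul_integral_forcing_mul_sin {N : ℕ} (hN : N ≠ 0) (ω : ℝ) :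
    ∫ τ in (0)..(2 * π), cos τ * ∫ x in (0)..π,
      (ω * cos τ * sin (N * x) - cos τ ^ 3 * sin (N * x) ^ 3 / sin x ^ 2) * sin (N * x)
      = π ^ 2 * (ω / 2 - 3 * N / 8) := by
  have hcos4 : ∫ τ in (0)..(2 * π), cos τ ^ 4 = 3 * π / 4 := by
    rw [integral_cos_pow (n := 2), integral_cos_sq]
    simp only [cos_two_pi, sin_two_pi, cos_zero, sin_zero]
    ring
  have hpoint (τ : ℝ) : cos τ * (ω * cos τ * (π / 2) - cos τ ^ 3 * (N * π / 2))
      = ω * π / 2 * cos τ ^ 2 - N * π / 2 * cos τ ^ 4 := by ring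
  simp_rw [integral_forcing_mul_sin hN, hpoint]
  rw [integral_sub, intervalIntegral.integral_const_mul, intervalIntegral.integral_const_mul,
    integral_cos_sq, hcos4]
  · simp only [cos_two_pi, sin_two_pi, cos_zero, sin_zero, mul_zero, sub_self, zero_add, sub_zero]
    ring
  all_goals exact (continuous_const.mul (by fun_prop)).intervalIntegrable _ _

theorem Function.Periodic.deriv {𝕜 F : Type*} [NontriviallyNormedField 𝕜] [NormedAddCommGroup F]
    [NormedSpace 𝕜 F] {f : 𝕜 → F} {c : 𝕜} (h : Periodic f c) : Periodic (deriv f) c :=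
  fun x => by rw [← deriv_comp_add_const, h.funext]

theorem deriv_deriv_eq_of_hasDerivAt {f f' : ℝ → ℝ} {x a : ℝ}
    (hf : ∀ᶠ y in 𝓝 x, HasDerivAt f (f' y) y) (hf' : HasDerivAt f' a x) :
    deriv (deriv f) x = a := by
  have h : deriv f =ᶠ[𝓝 x] f' := hf.mono fun y hy => hy.deriv
  rw [h.deriv_eq, hf'.deriv]

theorem integral_deriv2_add_mul_cos_eq_zero {f f' f'' : ℝ → ℝ} (hper : Periodic f (2 * π))
    (hf : ∀ t, HasDerivAt f (f' t) t) (hf' : ∀ t, HasDerivAt f' (f'' t) t)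
    (hint : IntervalIntegrable f'' volume 0 (2 * π)) :
    ∫ t in (0)..(2 * π), (f'' t + f t) * cos t = 0 := by
  have hderiv : ∀ t ∈ uIcc 0 (2 * π),
      HasDerivAt (fun t => f' t * cos t + f t * sin t) ((f'' t + f t) * cos t) t := fun t _ => by
    refine (((hf' t).mul (hasDerivAt_cos t)).add ((hf t).mul (hasDerivAt_sin t))).congr_deriv ?_
    ring
  have hcont : Continuous f := continuous_iff_continuousAt.mpr fun t => (hf t).continuousAt
  have hper' : f' (2 * π) = f' 0 := by
    simpa only [(hf _).deriv, zero_add] using hper.deriv 0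
  rw [integral_eq_sub_of_hasDerivAt hderiv
    ((hint.add (hcont.intervalIntegrable _ _)).mul_continuousOn continuousOn_cos)]
  simp [hper']

theorem integral_deriv2_add_sq_mul_sin_eq_zero (N : ℕ) {f f' f'' : ℝ → ℝ}
    (hf : ContinuousOn f (Icc 0 π)) (hf' : ContinuousOn f' (Icc 0 π))
    (hd : ∀ x ∈ Ioo 0 π, HasDerivAt f (f' x) x) (hd' : ∀ x ∈ Ioo 0 π, HasDerivAt f' (f'' x) x)
    (hint : IntervalIntegrable f'' volume 0 π) (h0 : f 0 = 0) (hπ : f π = 0) :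
    ∫ x in (0)..π, (f'' x + N ^ 2 * f x) * sin (N * x) = 0 := by
  have hsin (x : ℝ) : HasDerivAt (fun x => sin (N * x)) (N * cos (N * x)) x := by
    simpa [mul_comm] using ((hasDerivAt_id x).const_mul (N : ℝ)).sin
  have hcos (x : ℝ) : HasDerivAt (fun x => cos (N * x)) (-(N * sin (N * x))) x := by
    simpa [mul_comm] using ((hasDerivAt_id x).const_mul (N : ℝ)).cos
  have hderiv : ∀ x ∈ Ioo 0 π, HasDerivAt (fun x => f' x * sin (N * x) - N * (f x * cos (N * x)))
      ((f'' x + N ^ 2 * f x) * sin (N * x)) x := fun x hx => by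
    refine (((hd' x hx).mul (hsin x)).sub
      (((hd x hx).mul (hcos x)).const_mul (N : ℝ))).congr_deriv ?_
    ring
  have hint' : IntervalIntegrable (fun x => (f'' x + N ^ 2 * f x) * sin (N * x)) volume 0 π :=
    (hint.add ((hf.intervalIntegrable_of_Icc pi_pos.le).const_mul _)).mul_continuousOn
      (by fun_prop)
  rw [integral_eq_sub_of_hasDerivAt_of_le pi_pos.le (by fun_prop) hderiv hint']
  simp [h0, hπ, sin_nat_mul_pi]

open MeasureTheory in
theorem intervalIntegral_integral_swap_of_continuousOn {E : Type*} [NormedAddCommGroup E]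
    [NormedSpace ℝ E] {f : ℝ → ℝ → E} {a b c d : ℝ} (hab : a ≤ b) (hcd : c ≤ d)
    (hf : ContinuousOn (uncurry f) (Icc a b ×ˢ Icc c d)) :
    ∫ x in a..b, ∫ y in c..d, f x y = ∫ y in c..d, ∫ x in a..b, f x y := by
  have hint : Integrable (uncurry f)
      ((volume.restrict (Ioc a b)).prod (volume.restrict (Ioc c d))) := by
    rw [Measure.prod_restrict, ← Measure.volume_eq_prod]
    exact (hf.integrableOn_compact (isCompact_Icc.prod isCompact_Icc)).mono_set
      (prod_mono Ioc_subset_Icc_self Ioc_subset_Icc_self)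
  simp only [integral_of_le hab, integral_of_le hcd]
  exact integral_integral_swap hint

-- The derivative in direction `v` within the closed strip `ℝ × s`: unlike `deriv` of a slice,
-- it stays meaningful and continuous up to the boundary of the strip.
noncomputable def stripDeriv (s : Set ℝ) (v : ℝ × ℝ) (w : ℝ → ℝ → ℝ) (t x : ℝ) : ℝ :=
  fderivWithin ℝ (uncurry w) (univ ×ˢ s) (t, x) v

section Strip

variable {s : Set ℝ} {w : ℝ → ℝ → ℝ}

theorem ContDiffOn.stripDeriv {n : WithTop ℕ∞}
    (hw : ContDiffOn ℝ (n + 1) (uncurry w) (univ ×ˢ s)) (hs : UniqueDiffOn ℝ s) (v : ℝ × ℝ) :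
    ContDiffOn ℝ n (uncurry (stripDeriv s v w)) (univ ×ˢ s) :=
  (hw.fderivWithin (uniqueDiffOn_univ.prod hs) le_rfl).clm_apply contDiffOn_const

theorem DifferentiableOn.hasDerivAt_stripDeriv_fst
    (hw : DifferentiableOn ℝ (uncurry w) (univ ×ˢ s)) {x : ℝ} (hx : x ∈ s) (t : ℝ) :
    HasDerivAt (fun t => w t x) (stripDeriv s (1, 0) w t x) t := by
  have hline : HasDerivWithinAt (fun t : ℝ => (t, x)) ((1, 0) : ℝ × ℝ) univ t :=
    ((hasDerivAt_id t).prodMk (hasDerivAt_const t x)).hasDerivWithinAt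
  rw [← hasDerivWithinAt_univ]
  exact (hw (t, x) (mk_mem_prod trivial hx)).hasFDerivWithinAt.comp_hasDerivWithinAt t hline
    fun t _ => mk_mem_prod trivial hx

theorem DifferentiableOn.hasDerivAt_stripDeriv_snd
    (hw : DifferentiableOn ℝ (uncurry w) (univ ×ˢ s)) {x : ℝ} (hx : s ∈ 𝓝 x) (t : ℝ) :
    HasDerivAt (w t) (stripDeriv s (0, 1) w t x) x := by
  have hline : HasDerivWithinAt (fun x : ℝ => (t, x)) ((0, 1) : ℝ × ℝ) s x :=
    ((hasDerivAt_const x t).prodMk (hasDerivAt_id x)).hasDerivWithinAt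
  have hfderiv := (hw (t, x) (mk_mem_prod trivial (mem_of_mem_nhds hx))).hasFDerivWithinAt
  exact (hfderiv.comp_hasDerivWithinAt x hline fun x hx => mk_mem_prod trivial hx).hasDerivAt hx

end Strip

section Solution

variable {w : ℝ → ℝ → ℝ}

theorem integral_waveOperator_mul_sin (hw : ContDiffOn ℝ 2 (uncurry w) (univ ×ˢ Icc 0 π))
    (hbc0 : ∀ τ, w τ 0 = 0) (hbcπ : ∀ τ, w τ π = 0) (N : ℕ) (τ : ℝ) :
    ∫ x in (0)..π,
        ((N : ℝ) ^ 2 * deriv (deriv (fun t => w t x)) τ - deriv (deriv (fun y => w τ y)) x)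
          * sin (N * x)
      = N ^ 2 * ∫ x in (0)..π,
          (stripDeriv (Icc 0 π) (1, 0) (stripDeriv (Icc 0 π) (1, 0) w) τ x + w τ x)
            * sin (N * x) := by
  have hS : UniqueDiffOn ℝ (Icc 0 π) := uniqueDiffOn_Icc pi_pos
  have hw0 : ContDiffOn ℝ 0 (uncurry w) (univ ×ˢ Icc 0 π) := hw.of_le (by norm_num)
  have hwt := hw.stripDeriv (n := 1) hS (1, 0)
  have hwtt := hwt.stripDeriv (n := 0) hS (1, 0)
  have hwx := hw.stripDeriv (n := 1) hS (0, 1)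
  have hwxx := hwx.stripDeriv (n := 0) hS (0, 1)
  have hnhds {x : ℝ} (hx : x ∈ Ioo 0 π) : Icc 0 π ∈ 𝓝 x := Icc_mem_nhds hx.1 hx.2
  have hslice {G : ℝ → ℝ → ℝ} (hG : ContDiffOn ℝ 0 (uncurry G) (univ ×ˢ Icc 0 π)) :
      ContinuousOn (G τ) (Icc 0 π) :=
    hG.continuousOn.uncurry_left τ (mem_univ τ)
  have hint {g : ℝ → ℝ} (hg : ContinuousOn g (Icc 0 π)) :
      IntervalIntegrable (fun x => g x * sin (N * x)) volume 0 π :=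
    (hg.mul (by fun_prop)).intervalIntegrable_of_Icc pi_pos.le
  have hspace : ∫ x in (0)..π,
      (stripDeriv (Icc 0 π) (0, 1) (stripDeriv (Icc 0 π) (0, 1) w) τ x + N ^ 2 * w τ x)
        * sin (N * x) = 0 :=
    integral_deriv2_add_sq_mul_sin_eq_zero N (hslice hw0) (hslice (hwx.of_le (by norm_num)))
      (fun x hx => (hw.differentiableOn two_ne_zero).hasDerivAt_stripDeriv_snd (hnhds hx) τ)
      (fun x hx => (hwx.differentiableOn one_ne_zero).hasDerivAt_stripDeriv_snd (hnhds hx) τ)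
      ((hslice hwxx).intervalIntegrable_of_Icc pi_pos.le) (hbc0 τ) (hbcπ τ)
  have hpoint (x : ℝ) (hx : x ∈ Ioo 0 π) :
      ((N : ℝ) ^ 2 * deriv (deriv (fun t => w t x)) τ - deriv (deriv (fun y => w τ y)) x)
          * sin (N * x)
        = N ^ 2 * ((stripDeriv (Icc 0 π) (1, 0) (stripDeriv (Icc 0 π) (1, 0) w) τ x + w τ x)
            * sin (N * x))
          - (stripDeriv (Icc 0 π) (0, 1) (stripDeriv (Icc 0 π) (0, 1) w) τ x + N ^ 2 * w τ x)
            * sin (N * x) := by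
    rw [deriv_deriv_eq_of_hasDerivAt
        (Eventually.of_forall ((hw.differentiableOn two_ne_zero).hasDerivAt_stripDeriv_fst
          (Ioo_subset_Icc_self hx)))
        ((hwt.differentiableOn one_ne_zero).hasDerivAt_stripDeriv_fst (Ioo_subset_Icc_self hx) τ),
      deriv_deriv_eq_of_hasDerivAt
        (eventually_mem_nhds_iff.mpr (hnhds hx) |>.mono fun y hy =>
          (hw.differentiableOn two_ne_zero).hasDerivAt_stripDeriv_snd hy τ)
        ((hwx.differentiableOn one_ne_zero).hasDerivAt_stripDeriv_snd (hnhds hx) τ)]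
    ring
  rw [integral_congr_Ioo_of_le pi_pos.le hpoint,
    integral_sub ((hint (g := fun x => _ + w τ x) ((hslice hwtt).add (hslice hw0))).const_mul _)
      (hint (g := fun x => _ + _ * w τ x)
        ((hslice hwxx).add (continuousOn_const.mul (hslice hw0)))),
    intervalIntegral.integral_const_mul, hspace, sub_zero]

theorem integral_cos_mul_integral_deriv2_add_mul_sin_eq_zero
    (hw : ContDiffOn ℝ 2 (uncurry w) (univ ×ˢ Icc 0 π)) (hper : ∀ τ x, w (τ + 2 * π) x = w τ x)
    (N : ℕ) :
    ∫ τ in (0)..(2 * π), cos τ * ∫ x in (0)..π,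
      (stripDeriv (Icc 0 π) (1, 0) (stripDeriv (Icc 0 π) (1, 0) w) τ x + w τ x) * sin (N * x)
      = 0 := by
  have hS : UniqueDiffOn ℝ (Icc 0 π) := uniqueDiffOn_Icc pi_pos
  have hwt := hw.stripDeriv (n := 1) hS (1, 0)
  have hwtt := hwt.stripDeriv (n := 0) hS (1, 0)
  set G : ℝ → ℝ → ℝ := fun τ x =>
    stripDeriv (Icc 0 π) (1, 0) (stripDeriv (Icc 0 π) (1, 0) w) τ x + w τ x
  have hG : ContinuousOn (uncurry G) (univ ×ˢ Icc 0 π) := hwtt.continuousOn.add hw.continuousOn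
  have htime (x : ℝ) (hx : x ∈ Icc 0 π) : ∫ τ in (0)..(2 * π), G τ x * cos τ = 0 :=
    integral_deriv2_add_mul_cos_eq_zero (fun τ => hper τ x)
      ((hw.differentiableOn two_ne_zero).hasDerivAt_stripDeriv_fst hx)
      ((hwt.differentiableOn one_ne_zero).hasDerivAt_stripDeriv_fst hx)
      ((hwtt.continuousOn.uncurry_right x hx).mono (subset_univ _) |>.intervalIntegrable)
  have hrect : ContinuousOn (uncurry fun τ x => G τ x * sin (N * x) * cos τ)
      (Icc 0 (2 * π) ×ˢ Icc 0 π) :=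
    ((hG.mono (prod_mono (subset_univ _) subset_rfl)).mul (by fun_prop)).mul (by fun_prop)
  calc ∫ τ in (0)..(2 * π), cos τ * ∫ x in (0)..π, G τ x * sin (N * x)
        = ∫ τ in (0)..(2 * π), ∫ x in (0)..π, G τ x * sin (N * x) * cos τ := by
          simp_rw [intervalIntegral.integral_mul_const, mul_comm (cos _)]
    _ = ∫ x in (0)..π, ∫ τ in (0)..(2 * π), G τ x * sin (N * x) * cos τ :=
          intervalIntegral_integral_swap_of_continuousOn (by positivity) pi_pos.le hrect
    _ = ∫ x in (0)..π, sin (N * x) * ∫ τ in (0)..(2 * π), G τ x * cos τ := by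
          simp_rw [← intervalIntegral.integral_const_mul, mul_right_comm _ (sin _),
            mul_comm (sin _)]
    _ = 0 := by
          rw [integral_congr (g := 0) fun x hx => by
            simp [htime x (by rwa [uIcc_of_le pi_pos.le] at hx)]]
          simp

theorem integral_cos_mul_integral_waveOperator_mul_sin_eq_zero
    (hw : ContDiffOn ℝ 2 (uncurry w) (univ ×ˢ Icc 0 π)) (hper : ∀ τ x, w (τ + 2 * π) x = w τ x)
    (hbc0 : ∀ τ, w τ 0 = 0) (hbcπ : ∀ τ, w τ π = 0) (N : ℕ) :
    ∫ τ in (0)..(2 * π), cos τ * ∫ x in (0)..π,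
      ((N : ℝ) ^ 2 * deriv (deriv (fun t => w t x)) τ - deriv (deriv (fun y => w τ y)) x)
        * sin (N * x) = 0 := by
  simp_rw [integral_waveOperator_mul_sin hw hbc0 hbcπ, mul_left_comm (cos _),
    intervalIntegral.integral_const_mul,
    integral_cos_mul_integral_deriv2_add_mul_sin_eq_zero hw hper, mul_zero]

end Solution

theorem first_order_frequency_correction (N : ℕ) (hN : 0 < N) (ω : ℝ)
    (w : ℝ → ℝ → ℝ)
    (hw : ContDiffOn ℝ 2 (Function.uncurry w) (Set.univ ×ˢ Set.Icc 0 π))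
    (hper : ∀ τ x : ℝ, w (τ + 2 * π) x = w τ x)
    (hbc0 : ∀ τ : ℝ, w τ 0 = 0)
    (hbcπ : ∀ τ : ℝ, w τ π = 0)
    (hpde : ∀ τ x : ℝ, x ∈ Set.Ioo 0 π →
      (N : ℝ) ^ 2 * deriv (deriv (fun t => w t x)) τ
        - deriv (deriv (fun y => w τ y)) x
        = ω * Real.cos τ * Real.sin (N * x)
          - (Real.cos τ) ^ 3 * (Real.sin (N * x)) ^ 3 / (Real.sin x) ^ 2) :
    ω = 3 * N / 4 := by
  have hproj := integral_cos_mul_integral_waveOperator_mul_sin_eq_zero hw hper hbc0 hbcπ N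
  have hinner (τ : ℝ) :
      ∫ x in (0)..π, ((N : ℝ) ^ 2 * deriv (deriv (fun t => w t x)) τ
          - deriv (deriv (fun y => w τ y)) x) * sin (N * x)
        = ∫ x in (0)..π,
          (ω * cos τ * sin (N * x) - cos τ ^ 3 * sin (N * x) ^ 3 / sin x ^ 2) * sin (N * x) :=
    integral_congr_Ioo_of_le pi_pos.le fun x hx => by rw [hpde τ x hx]
  simp_rw [hinner, integral_cos_mul_integral_forcing_mul_sin hN.ne' ω] at hproj
  have hπ : π ^ 2 ≠ 0 := by positivity
  linarith [(mul_eq_zero.mp hproj).resolve_left hπ]
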